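/- arXiv:1205.4549 — 3 statements merged into one kernel-verified Lean document; each statement's English description precedes it below -/
import Mathlib

section
/- Let a < b be real numbers and let f : [a,b] → ℝ be twice continuously differentiable on (a,b) with f'' ∈ L²[a,b]. Then |(f((3a+b)/4) + f((a+3b)/4))/2 − (1/(b−a)) ∫_a^b f(t) dt| ≤ ((b−a)^{3/2}/(4√3 π)) · ‖f''‖₂. -/
/-!
With `x₁ = (3a + b)/4`, `x₂ = (a + 3b)/4` and the Peano kernel `K t = (t - e)²`, where `e` is
`a`, `(a + b)/2`, `b` on `[a, x₁]`, `[x₁, x₂]`, `[x₂, b]`, two integrations by parts give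
`∫ₐᵇ K f'' = 2 ∫ₐᵇ f - (b - a) (f x₁ + f x₂)`. For this `f'` is replaced by its continuous
extension `t ↦ f' m + ∫ₘᵗ f''` (`m` the midpoint) to `[a, b]`, available as `f'' ∈ L² ⊆ L¹`. Since
`|K| ≤ ((b - a)/4)²` and `∫ₐᵇ |f''| ≤ √(b - a) ‖f''‖₂` (Cauchy–Schwarz), the error is at most
`(b - a)^{3/2} ‖f''‖₂ / 32`, and `4√3π ≤ 32`.
-/

open MeasureTheory Set intervalIntegral

theorem IntervalIntegrable.of_sq {g : ℝ → ℝ} {a b : ℝ}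
    (hg : AEStronglyMeasurable g (volume.restrict (uIoc a b)))
    (hg2 : IntervalIntegrable (fun t => g t ^ 2) volume a b) :
    IntervalIntegrable g volume a b := by
  have : IsFiniteMeasure (volume.restrict (uIoc a b)) :=
    isFiniteMeasure_restrict.2 measure_Ioc_lt_top.ne
  exact intervalIntegrable_iff.2
    (((memLp_two_iff_integrable_sq hg).2 (intervalIntegrable_iff.1 hg2)).integrable one_le_two)

theorem integral_abs_le_sqrt_mul_sqrt_integral_sq {g : ℝ → ℝ} {a b : ℝ} (hab : a ≤ b)
    (hg : IntervalIntegrable g volume a b)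
    (hg2 : IntervalIntegrable (fun t => g t ^ 2) volume a b) :
    ∫ t in a..b, |g t| ≤ √(b - a) * √(∫ t in a..b, g t ^ 2) := by
  set A := ∫ t in a..b, |g t|
  set Q := ∫ t in a..b, g t ^ 2
  have hquad : ∀ x : ℝ, 0 ≤ (b - a) * (x * x) + (-2 * A) * x + Q := fun x => by
    have hexpand : ∫ t in a..b, (|g t| - x) ^ 2 = (b - a) * (x * x) + (-2 * A) * x + Q := by
      have hpt : ∀ t, (|g t| - x) ^ 2 = (g t ^ 2 + (-2 * x) * |g t|) + x * x := fun t => by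
        rw [← sq_abs (g t)]; ring
      simp only [hpt]
      rw [integral_add (hg2.add (hg.abs.const_mul _)) intervalIntegrable_const,
        integral_add hg2 (hg.abs.const_mul _), intervalIntegral.integral_const_mul,
        intervalIntegral.integral_const, smul_eq_mul]
      ring
    exact hexpand ▸ integral_nonneg hab fun t _ => sq_nonneg _
  have hdiscr := discrim_le_zero hquad
  rw [discrim] at hdiscr
  calc A ≤ |A| := le_abs_self A
    _ ≤ √((b - a) * Q) := Real.abs_le_sqrt (by nlinarith)
    _ = √(b - a) * √Q := Real.sqrt_mul (sub_nonneg.2 hab) Q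

theorem exists_continuousOn_Icc_eqOn_Ioo_of_hasDerivAt {g g' : ℝ → ℝ} {a b : ℝ}
    (hderiv : ∀ t ∈ Ioo a b, HasDerivAt g (g' t) t) (hint : IntervalIntegrable g' volume a b) :
    ∃ p, ContinuousOn p (Icc a b) ∧ EqOn p g (Ioo a b) := by
  have hm : (a + b) / 2 ∈ uIcc a b := mem_uIcc.2 <| (le_total a b).imp
    (fun _ => ⟨by linarith, by linarith⟩) (fun _ => ⟨by linarith, by linarith⟩)
  refine ⟨fun t => g ((a + b) / 2) + ∫ s in (a + b) / 2..t, g' s,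
    (continuousOn_const.add (continuousOn_primitive_interval' hint hm)).mono Icc_subset_uIcc,
    fun t ht => ?_⟩
  have hsub : uIcc ((a + b) / 2) t ⊆ Ioo a b :=
    ordConnected_Ioo.uIcc_subset ⟨by linarith [ht.1, ht.2], by linarith [ht.1, ht.2]⟩ ht
  have hFTC := integral_eq_sub_of_hasDerivAt (fun s hs => hderiv s (hsub hs))
    (hint.mono_set (hsub.trans (Ioo_subset_Icc_self.trans Icc_subset_uIcc)))
  simp only [hFTC, add_sub_cancel]

theorem integral_sub_sq_mul_eq {f p f'' : ℝ → ℝ} {c d : ℝ} (e : ℝ) (hcd : c ≤ d)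
    (hf : ContinuousOn f (Icc c d)) (hp : ContinuousOn p (Icc c d))
    (hfp : ∀ t ∈ Ioo c d, HasDerivAt f (p t) t) (hpf : ∀ t ∈ Ioo c d, HasDerivAt p (f'' t) t)
    (hf'' : IntervalIntegrable f'' volume c d) :
    ∫ t in c..d, (t - e) ^ 2 * f'' t
      = (d - e) ^ 2 * p d - 2 * (d - e) * f d - ((c - e) ^ 2 * p c - 2 * (c - e) * f c)
        + 2 * ∫ t in c..d, f t := by
  have hG : ∀ t ∈ Ioo c d, HasDerivAt (fun t => (t - e) ^ 2 * p t - 2 * (t - e) * f t)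
      ((t - e) ^ 2 * f'' t - 2 * f t) t := fun t ht => by
    have hsq : HasDerivAt (fun t => (t - e) ^ 2) (2 * (t - e)) t := by
      simpa using ((hasDerivAt_id t).sub_const e).fun_pow 2
    have hlin : HasDerivAt (fun t => 2 * (t - e)) 2 t := by
      simpa using ((hasDerivAt_id t).sub_const e).const_mul 2
    exact ((hsq.mul (hpf t ht)).sub (hlin.mul (hfp t ht))).congr_deriv (by ring)
  have hfi : IntervalIntegrable f volume c d :=
    (hf.mono (uIcc_of_le hcd).subset).intervalIntegrable
  have hKf'' : IntervalIntegrable (fun t => (t - e) ^ 2 * f'' t) volume c d :=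
    hf''.continuousOn_mul (by fun_prop)
  have hFTC := integral_eq_sub_of_hasDerivAt_of_le hcd (by fun_prop) hG
    (hKf''.sub (hfi.const_mul 2))
  rw [integral_sub hKf'' (hfi.const_mul 2), intervalIntegral.integral_const_mul] at hFTC
  linarith

noncomputable def quarterPeanoIntegral (a b : ℝ) (g : ℝ → ℝ) : ℝ :=
  (∫ t in a..(3 * a + b) / 4, (t - a) ^ 2 * g t)
    + (∫ t in (3 * a + b) / 4..(a + 3 * b) / 4, (t - (a + b) / 2) ^ 2 * g t)
    + ∫ t in (a + 3 * b) / 4..b, (t - b) ^ 2 * g t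

theorem quarterPeanoIntegral_eq {f p f'' : ℝ → ℝ} {a b : ℝ} (hab : a ≤ b)
    (hf : ContinuousOn f (Icc a b)) (hp : ContinuousOn p (Icc a b))
    (hfp : ∀ t ∈ Ioo a b, HasDerivAt f (p t) t) (hpf : ∀ t ∈ Ioo a b, HasDerivAt p (f'' t) t)
    (hf'' : IntervalIntegrable f'' volume a b) :
    quarterPeanoIntegral a b f''
      = 2 * (∫ t in a..b, f t) - (b - a) * (f ((3 * a + b) / 4) + f ((a + 3 * b) / 4)) := by
  have hsub : ∀ {c d}, a ≤ c → c ≤ d → d ≤ b → uIcc c d ⊆ uIcc a b := fun hac hcd hdb => by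
    rw [uIcc_of_le hcd, uIcc_of_le hab]; exact Icc_subset_Icc hac hdb
  have hfi : ∀ {c d}, a ≤ c → c ≤ d → d ≤ b → IntervalIntegrable f volume c d :=
    fun hac hcd hdb =>
      (hf.mono ((hsub hac hcd hdb).trans (uIcc_of_le hab).subset)).intervalIntegrable
  have piece : ∀ {c d} (e : ℝ), a ≤ c → c ≤ d → d ≤ b → ∫ t in c..d, (t - e) ^ 2 * f'' t
      = (d - e) ^ 2 * p d - 2 * (d - e) * f d - ((c - e) ^ 2 * p c - 2 * (c - e) * f c)
        + 2 * ∫ t in c..d, f t := fun e hac hcd hdb =>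
    integral_sub_sq_mul_eq e hcd (hf.mono (Icc_subset_Icc hac hdb))
      (hp.mono (Icc_subset_Icc hac hdb)) (fun t ht => hfp t (Ioo_subset_Ioo hac hdb ht))
      (fun t ht => hpf t (Ioo_subset_Ioo hac hdb ht)) (hf''.mono_set (hsub hac hcd hdb))
  have h₁ : a ≤ (3 * a + b) / 4 := by linarith
  have h₂ : (3 * a + b) / 4 ≤ (a + 3 * b) / 4 := by linarith
  have h₃ : (a + 3 * b) / 4 ≤ b := by linarith
  rw [quarterPeanoIntegral, piece a le_rfl h₁ (h₂.trans h₃),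
    piece _ h₁ h₂ h₃, piece b (h₁.trans h₂) h₃ le_rfl,
    ← integral_add_adjacent_intervals (hfi le_rfl h₁ (h₂.trans h₃))
      (hfi h₁ (h₂.trans h₃) le_rfl),
    ← integral_add_adjacent_intervals (hfi h₁ h₂ h₃) (hfi (h₁.trans h₂) h₃ le_rfl)]
  ring

theorem abs_integral_sub_sq_mul_le {g : ℝ → ℝ} {c d e h : ℝ} (hcd : c ≤ d)
    (hc : e - h ≤ c) (hd : d ≤ e + h) (hg : IntervalIntegrable g volume c d) :
    |∫ t in c..d, (t - e) ^ 2 * g t| ≤ h ^ 2 * ∫ t in c..d, |g t| := by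
  rw [← intervalIntegral.integral_const_mul, ← Real.norm_eq_abs]
  refine norm_integral_le_of_norm_le hcd (ae_of_all _ fun t ht => ?_) (hg.abs.const_mul _)
  rw [Real.norm_eq_abs, abs_mul, abs_sq]
  exact mul_le_mul_of_nonneg_right
    (sq_le_sq.2 ((abs_le.2 ⟨by linarith [ht.1], by linarith [ht.2]⟩).trans (le_abs_self h)))
    (abs_nonneg _)

theorem abs_quarterPeanoIntegral_le {g : ℝ → ℝ} {a b : ℝ} (hab : a ≤ b)
    (hg : IntervalIntegrable g volume a b) :
    |quarterPeanoIntegral a b g| ≤ ((b - a) / 4) ^ 2 * ∫ t in a..b, |g t| := by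
  have h₁ : a ≤ (3 * a + b) / 4 := by linarith
  have h₂ : (3 * a + b) / 4 ≤ (a + 3 * b) / 4 := by linarith
  have h₃ : (a + 3 * b) / 4 ≤ b := by linarith
  have hgi : ∀ {c d}, a ≤ c → c ≤ d → d ≤ b → IntervalIntegrable g volume c d :=
    fun hac hcd hdb => hg.mono_set (by
      rw [uIcc_of_le hcd, uIcc_of_le hab]; exact Icc_subset_Icc hac hdb)
  rw [quarterPeanoIntegral,
    ← integral_add_adjacent_intervals (hgi le_rfl (h₁.trans h₂) h₃).abs
      (hgi (h₁.trans h₂) h₃ le_rfl).abs,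
    ← integral_add_adjacent_intervals (hgi le_rfl h₁ (h₂.trans h₃)).abs (hgi h₁ h₂ h₃).abs,
    mul_add, mul_add]
  refine (abs_add_three _ _ _).trans (add_le_add_three ?_ ?_ ?_)
  · exact abs_integral_sub_sq_mul_le h₁ (by linarith) (by linarith) (hgi le_rfl h₁ (h₂.trans h₃))
  · exact abs_integral_sub_sq_mul_le h₂ (by linarith) (by linarith) (hgi h₁ h₂ h₃)
  · exact abs_integral_sub_sq_mul_le h₃ (by linarith) (by linarith) (hgi (h₁.trans h₂) h₃ le_rfl)

theorem companion_ostrowski_second_deriv_L2_trapezoid_type_general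
    (a b : ℝ) (hab : a < b) (f f' f'' : ℝ → ℝ)
    (hcont : ContinuousOn f (Set.Icc a b))
    (hderiv : ∀ t ∈ Set.Ioo a b, HasDerivAt f (f' t) t)
    (hderiv2 : ∀ t ∈ Set.Ioo a b, HasDerivAt f' (f'' t) t)
    (hL2 : IntervalIntegrable (fun t => (f'' t) ^ 2) MeasureTheory.volume a b) :
    |(f ((3 * a + b) / 4) + f ((a + 3 * b) / 4)) / 2 - (1 / (b - a)) * ∫ t in a..b, f t|
      ≤ (b - a) ^ ((3 : ℝ) / 2) / (4 * Real.sqrt 3 * Real.pi) *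
          Real.sqrt (∫ t in a..b, (f'' t) ^ 2) := by
  have hf''_meas : AEStronglyMeasurable f'' (volume.restrict (uIoc a b)) := by
    rw [uIoc_of_le hab.le, ← Measure.restrict_congr_set Ioo_ae_eq_Ioc]
    exact (aestronglyMeasurable_deriv f' _).congr <|
      (ae_restrict_mem measurableSet_Ioo).mono fun t ht => (hderiv2 t ht).deriv
  have hf'' := IntervalIntegrable.of_sq hf''_meas hL2
  obtain ⟨p, hp_cont, hp_eq⟩ := exists_continuousOn_Icc_eqOn_Ioo_of_hasDerivAt hderiv2 hf''
  have hpeano := quarterPeanoIntegral_eq hab.le hcont hp_cont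
    (fun t ht => hp_eq ht ▸ hderiv t ht)
    (fun t ht => (hderiv2 t ht).congr_of_eventuallyEq
      (Filter.eventuallyEq_of_mem (isOpen_Ioo.mem_nhds ht) hp_eq)) hf''
  have hL : 0 < b - a := sub_pos.2 hab
  have hrpow : (b - a) ^ ((3 : ℝ) / 2) = (b - a) * √(b - a) := by
    rw [show (3 : ℝ) / 2 = 1 + 1 / 2 by norm_num, Real.rpow_add hL, Real.rpow_one,
      Real.sqrt_eq_rpow]
  have hconst : 4 * √3 * Real.pi ≤ 32 := by
    have : √3 ≤ 2 := Real.sqrt_le_iff.2 ⟨by norm_num, by norm_num⟩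
    nlinarith [Real.pi_le_four, Real.pi_pos, Real.sqrt_nonneg 3]
  calc _ = |-(quarterPeanoIntegral a b f'' / (2 * (b - a)))| := by
        rw [hpeano]; congr 1; field_simp; ring
    _ = |quarterPeanoIntegral a b f''| / (2 * (b - a)) := by
        rw [abs_neg, abs_div, abs_of_pos (by positivity : 0 < 2 * (b - a))]
    _ ≤ ((b - a) / 4) ^ 2 * (√(b - a) * √(∫ t in a..b, f'' t ^ 2)) / (2 * (b - a)) := by
        gcongr
        exact (abs_quarterPeanoIntegral_le hab.le hf'').trans
          (by gcongr; exact integral_abs_le_sqrt_mul_sqrt_integral_sq hab.le hf'' hL2)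
    _ = (b - a) ^ ((3 : ℝ) / 2) / 32 * √(∫ t in a..b, f'' t ^ 2) := by
        rw [hrpow]; field_simp; ring
    _ ≤ _ := by gcongr

/-- **Trapezoid type inequality for `f'' ∈ L²[a,b]`** (Corollary of Theorem 2.2, inequality
(2.26)): `|(f((3a+b)/4) + f((a+3b)/4))/2 - (1/(b-a)) ∫_a^b f| ≤ ((b-a)^{3/2}/(4√3 π)) ‖f''‖₂`. -/
theorem companion_ostrowski_second_deriv_L2_trapezoid_type
    (a b : ℝ) (hab : a < b) (f f' f'' : ℝ → ℝ)
    (hcont : ContinuousOn f (Set.Icc a b))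
    (hderiv : ∀ t ∈ Set.Ioo a b, HasDerivAt f (f' t) t)
    (hderiv2 : ∀ t ∈ Set.Ioo a b, HasDerivAt f' (f'' t) t)
    (hcont2 : ContinuousOn f'' (Set.Ioo a b))
    (hL2 : IntervalIntegrable (fun t => (f'' t) ^ 2) MeasureTheory.volume a b) :
    |(f ((3 * a + b) / 4) + f ((a + 3 * b) / 4)) / 2 - (1 / (b - a)) * ∫ t in a..b, f t|
      ≤ (b - a) ^ ((3 : ℝ) / 2) / (4 * Real.sqrt 3 * Real.pi) *
          Real.sqrt (∫ t in a..b, (f'' t) ^ 2) :=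
  companion_ostrowski_second_deriv_L2_trapezoid_type_general a b hab f f' f'' hcont hderiv hderiv2
    hL2
end

section
/- Let a < b be real numbers and let f : [a,b] → ℝ be absolutely continuous on [a,b] with f' ∈ L²[a,b]. Set σ(f') = ‖f'‖₂² − (f(b) − f(a))²/(b − a), where ‖f'‖₂² = ∫_a^b (f'(t))² dt. Then for all x ∈ [a, (a+b)/2], |(f(x) + f(a+b−x))/2 − (1/(b−a)) ∫_a^b f(t) dt| ≤ (b−a)^{−1/2} · [ (b−a)²/48 + (x − (3a+b)/4)² ]^{1/2} · √(σ(f')). -/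
/-!
Write `y = a + b - x` and let `K` be the kernel equal to `t - a` on `[a, x]`,
`t - (a + b) / 2` on `(x, y]` and `t - b` on `(y, b]`. Integrating by parts on each piece
(the primitive of `f'` is absolutely continuous) gives
`∫ K f' = (b - a) (f x + f y) / 2 - ∫ f`. Since `∫ K = 0`, `f'` may be replaced by
`f' - (f b - f a) / (b - a)`, whose squared `L²` norm is `σ(f')`, and Cauchy–Schwarz finishes
with `∫ K² = (b - a) ((b - a)² / 48 + (x - (3a + b) / 4)²)`.
-/

open MeasureTheory Set intervalIntegral
open scoped Interval

theorem sq_integral_mul_le_integral_sq_mul_integral_sq {α : Type*} [MeasurableSpace α]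
    {μ : Measure α} {g h : α → ℝ} (hg : Integrable (fun t => g t ^ 2) μ)
    (hh : Integrable (fun t => h t ^ 2) μ) (hgh : Integrable (fun t => g t * h t) μ) :
    (∫ t, g t * h t ∂μ) ^ 2 ≤ (∫ t, g t ^ 2 ∂μ) * ∫ t, h t ^ 2 ∂μ := by
  have hquad : ∀ s : ℝ, 0 ≤ (∫ t, g t ^ 2 ∂μ) * (s * s) + 2 * (∫ t, g t * h t ∂μ) * s
      + ∫ t, h t ^ 2 ∂μ := fun s => calc
    0 ≤ ∫ t, (s * g t + h t) ^ 2 ∂μ := integral_nonneg fun t => sq_nonneg _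
    _ = ∫ t, (s ^ 2 * g t ^ 2 + 2 * s * (g t * h t) + h t ^ 2) ∂μ := by congr 1; ext t; ring
    _ = _ := by
      have hsum : Integrable (fun t => s ^ 2 * g t ^ 2 + 2 * s * (g t * h t)) μ :=
        (hg.const_mul _).add (hgh.const_mul _)
      rw [integral_add hsum hh,
        integral_add (hg.const_mul _) (hgh.const_mul _), MeasureTheory.integral_const_mul,
        MeasureTheory.integral_const_mul]
      ring
  have hdiscrim := discrim_le_zero hquad
  rw [discrim] at hdiscrim
  linarith

theorem integral_sq_sub_average {g : ℝ → ℝ} {a b : ℝ} (hab : a ≠ b)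
    (hg : IntervalIntegrable g volume a b)
    (hg2 : IntervalIntegrable (fun t => g t ^ 2) volume a b) :
    ∫ t in a..b, (g t - (∫ s in a..b, g s) / (b - a)) ^ 2
      = (∫ t in a..b, g t ^ 2) - (∫ s in a..b, g s) ^ 2 / (b - a) := by
  set m := (∫ s in a..b, g s) / (b - a) with hm
  have hexpand : (fun t => (g t - m) ^ 2) = fun t => g t ^ 2 - 2 * m * g t + m ^ 2 := by
    ext t; ring
  rw [hexpand, integral_add (hg2.sub (hg.const_mul _)) intervalIntegrable_const,
    integral_sub hg2 (hg.const_mul _), intervalIntegral.integral_const_mul,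
    intervalIntegral.integral_const, smul_eq_mul, hm]
  field_simp [sub_ne_zero.2 hab.symm]
  ring

theorem IntervalIntegrable.sq_sub_const {g : ℝ → ℝ} {a b : ℝ}
    (hg : IntervalIntegrable g volume a b) (hg2 : IntervalIntegrable (fun t => g t ^ 2) volume a b)
    (m : ℝ) : IntervalIntegrable (fun t => (g t - m) ^ 2) volume a b := by
  have hexpand : (fun t => (g t - m) ^ 2) = fun t => g t ^ 2 - 2 * m * g t + m ^ 2 := by
    ext t; ring
  rw [hexpand]
  exact (hg2.sub (hg.const_mul _)).add intervalIntegrable_const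

theorem abs_div_le_of_sq_le {A d C σ : ℝ} (hd : 0 < d) (hC : 0 ≤ C) (h : A ^ 2 ≤ d * C * σ) :
    |A / d| ≤ (√d)⁻¹ * √C * √σ := calc
  |A / d| ≤ √(C * σ / d) := by
    refine Real.abs_le_sqrt ?_
    rw [div_pow, div_le_div_iff₀ (by positivity) hd]
    nlinarith
  _ = (√d)⁻¹ * √C * √σ := by
    rw [Real.sqrt_div' _ hd.le, Real.sqrt_mul hC]
    ring

theorem integral_sub_mul_eq_sub_integral_primitive {g : ℝ → ℝ} {a b u v : ℝ}
    (hg : IntervalIntegrable g volume a b) (hu : u ∈ [[a, b]]) (hv : v ∈ [[a, b]]) (k : ℝ) :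
    ∫ t in u..v, (t - k) * g t
      = (v - k) * (∫ s in a..v, g s) - (u - k) * (∫ s in a..u, g s)
        - ∫ t in u..v, ∫ s in a..t, g s := by
  have huv : [[u, v]] ⊆ [[a, b]] := uIcc_subset_uIcc hu hv
  have hG : AbsolutelyContinuousOnInterval (fun t => ∫ s in a..t, g s) u v :=
    (hg.absolutelyContinuousOnInterval_intervalIntegral left_mem_uIcc).mono huv
  have hk : AbsolutelyContinuousOnInterval (fun t => t - k) u v :=
    ContDiffOn.absolutelyContinuousOnInterval (by fun_prop)
  have hderiv : ∀ᵐ t, t ∈ Ι u v →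
      (t - k) * g t = (t - k) * deriv (fun t => ∫ s in a..t, g s) t := by
    filter_upwards [hg.ae_hasDerivAt_integral] with t ht htuv
    rw [(ht (huv (uIoc_subset_uIcc htuv)) a left_mem_uIcc).deriv]
  rw [integral_congr_ae hderiv, hk.integral_mul_deriv_eq_deriv_mul hG]
  simp

noncomputable def companionKernel (a b x t : ℝ) : ℝ :=
  if t ≤ x then t - a else if t ≤ a + b - x then t - (a + b) / 2 else t - b

section companionKernel

variable {a b x : ℝ}

theorem companionKernel_eqOn (hx : x ≤ (a + b) / 2) :
    EqOn (companionKernel a b x) (· - a) (Ioo a x) ∧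
      EqOn (companionKernel a b x) (· - (a + b) / 2) (Ioo x (a + b - x)) ∧
      EqOn (companionKernel a b x) (· - b) (Ioo (a + b - x) b) := by
  refine ⟨fun t ht => if_pos ht.2.le, fun t ht => ?_, fun t ht => ?_⟩
  · rw [companionKernel, if_neg (not_le.2 ht.1), if_pos ht.2.le]
  · have hxt : x < t := by linarith [ht.1]
    rw [companionKernel, if_neg (not_le.2 hxt), if_neg (not_le.2 ht.1)]

variable (Ψ : ℝ → ℝ → ℝ) (hΨ : ∀ k, IntervalIntegrable (fun t => Ψ t (t - k)) volume a b)
  (hx : x ∈ Icc a ((a + b) / 2))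
include hΨ hx

theorem intervalIntegrable_comp_companionKernel_pieces :
    IntervalIntegrable (fun t => Ψ t (companionKernel a b x t)) volume a x ∧
      IntervalIntegrable (fun t => Ψ t (companionKernel a b x t)) volume x (a + b - x) ∧
      IntervalIntegrable (fun t => Ψ t (companionKernel a b x t)) volume (a + b - x) b := by
  have piece : ∀ {k u v}, a ≤ u → u ≤ v → v ≤ b →
      EqOn (companionKernel a b x) (· - k) (Ioo u v) →
      IntervalIntegrable (fun t => Ψ t (companionKernel a b x t)) volume u v := by
    intro k u v hau huv hvb h
    refine (intervalIntegrable_congr_uIoo fun t ht => ?_).2 ((hΨ k).mono_set ?_)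
    · rw [h (uIoo_of_le huv ▸ ht)]
    · rw [uIcc_of_le huv, uIcc_of_le (hau.trans (huv.trans hvb))]
      exact Icc_subset_Icc hau hvb
  obtain ⟨hax, hxc⟩ := hx
  obtain ⟨h₁, h₂, h₃⟩ := companionKernel_eqOn hxc
  exact ⟨piece le_rfl hax (by linarith) h₁, piece hax (by linarith) (by linarith) h₂,
    piece (by linarith) (by linarith) le_rfl h₃⟩

theorem intervalIntegrable_comp_companionKernel :
    IntervalIntegrable (fun t => Ψ t (companionKernel a b x t)) volume a b :=
  let ⟨i₁, i₂, i₃⟩ := intervalIntegrable_comp_companionKernel_pieces Ψ hΨ hx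
  (i₁.trans i₂).trans i₃

theorem integral_comp_companionKernel :
    ∫ t in a..b, Ψ t (companionKernel a b x t)
      = (∫ t in a..x, Ψ t (t - a)) + (∫ t in x..a + b - x, Ψ t (t - (a + b) / 2))
        + ∫ t in a + b - x..b, Ψ t (t - b) := by
  obtain ⟨i₁, i₂, i₃⟩ := intervalIntegrable_comp_companionKernel_pieces Ψ hΨ hx
  obtain ⟨hax, hxc⟩ := hx
  obtain ⟨h₁, h₂, h₃⟩ := companionKernel_eqOn hxc
  have hxy : x ≤ a + b - x := by linarith
  have hyb : a + b - x ≤ b := by linarith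
  rw [← integral_add_adjacent_intervals i₁ (i₂.trans i₃), ← integral_add_adjacent_intervals i₂ i₃,
    integral_congr_Ioo_of_le hax fun t ht => by rw [h₁ ht],
    integral_congr_Ioo_of_le hxy fun t ht => by rw [h₂ ht],
    integral_congr_Ioo_of_le hyb fun t ht => by rw [h₃ ht], add_assoc]

omit hΨ

theorem integral_companionKernel : ∫ t in a..b, companionKernel a b x t = 0 := by
  have hlin : ∀ u v k : ℝ, ∫ t in u..v, (t - k) = ((v - k) ^ 2 - (u - k) ^ 2) / 2 := by
    intro u v k
    simp [integral_comp_sub_right (fun t => t) k]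
  rw [integral_comp_companionKernel (fun _ r => r)
    (fun _ => Continuous.intervalIntegrable (by fun_prop) _ _) hx, hlin, hlin, hlin]
  ring

theorem integral_companionKernel_sq :
    ∫ t in a..b, companionKernel a b x t ^ 2
      = (b - a) * ((b - a) ^ 2 / 48 + (x - (3 * a + b) / 4) ^ 2) := by
  have hcube : ∀ u v k : ℝ, ∫ t in u..v, (t - k) ^ 2 = ((v - k) ^ 3 - (u - k) ^ 3) / 3 := by
    intro u v k
    norm_num [integral_comp_sub_right (fun t => t ^ 2) k]
  rw [integral_comp_companionKernel (fun _ r => r ^ 2)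
    (fun _ => Continuous.intervalIntegrable (by fun_prop) _ _) hx, hcube, hcube, hcube]
  ring

theorem integral_companionKernel_mul {F g : ℝ → ℝ} (hg : IntervalIntegrable g volume a b)
    (hF : ∀ t ∈ Icc a b, F t - F a = ∫ s in a..t, g s) :
    ∫ t in a..b, companionKernel a b x t * g t
      = (b - a) * ((F x + F (a + b - x)) / 2) - ∫ t in a..b, F t := by
  obtain ⟨hax, hxc⟩ := hx
  have hab : a ≤ b := by linarith
  have hxab : x ∈ [[a, b]] := Icc_subset_uIcc ⟨hax, by linarith⟩
  have hyab : a + b - x ∈ [[a, b]] := Icc_subset_uIcc ⟨by linarith, by linarith⟩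
  have hG : IntervalIntegrable (fun t => ∫ s in a..t, g s) volume a b :=
    (hg.absolutelyContinuousOnInterval_intervalIntegral
      left_mem_uIcc).continuousOn.intervalIntegrable
  have hIF : ∫ t in a..b, F t = (b - a) * F a + ∫ t in a..b, ∫ s in a..t, g s := by
    rw [integral_congr (g := fun t => F a + ∫ s in a..t, g s) fun t ht => by
        linarith [hF t (uIcc_of_le hab ▸ ht)],
      integral_add intervalIntegrable_const hG, intervalIntegral.integral_const, smul_eq_mul]
  -- a `Ψ` ignoring the kernel value merely splits `∫ t in a..b, ∫ s in a..t, g s`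
  rw [integral_comp_companionKernel (fun t r => r * g t)
      (fun _ => hg.continuousOn_mul (by fun_prop)) ⟨hax, hxc⟩, hIF,
    integral_comp_companionKernel (fun t _ => ∫ s in a..t, g s) (fun _ => hG) ⟨hax, hxc⟩,
    integral_sub_mul_eq_sub_integral_primitive hg left_mem_uIcc hxab,
    integral_sub_mul_eq_sub_integral_primitive hg hxab hyab,
    integral_sub_mul_eq_sub_integral_primitive hg hyab right_mem_uIcc,
    ← hF x (uIcc_of_le hab ▸ hxab), ← hF (a + b - x) (uIcc_of_le hab ▸ hyab)]
  ring

theorem sq_integral_companionKernel_mul_le {g : ℝ → ℝ} (hab : a < b)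
    (hg : IntervalIntegrable g volume a b)
    (hg2 : IntervalIntegrable (fun t => g t ^ 2) volume a b) :
    (∫ t in a..b, companionKernel a b x t * g t) ^ 2
      ≤ (b - a) * ((b - a) ^ 2 / 48 + (x - (3 * a + b) / 4) ^ 2)
        * ((∫ t in a..b, g t ^ 2) - (∫ t in a..b, g t) ^ 2 / (b - a)) := by
  set m := (∫ t in a..b, g t) / (b - a)
  have hK : IntervalIntegrable (companionKernel a b x) volume a b :=
    intervalIntegrable_comp_companionKernel (fun _ r => r)
      (fun _ => Continuous.intervalIntegrable (by fun_prop) _ _) hx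
  have hK2 : IntervalIntegrable (fun t => companionKernel a b x t ^ 2) volume a b :=
    intervalIntegrable_comp_companionKernel (fun _ r => r ^ 2)
      (fun _ => Continuous.intervalIntegrable (by fun_prop) _ _) hx
  have hKg : IntervalIntegrable (fun t => companionKernel a b x t * g t) volume a b :=
    intervalIntegrable_comp_companionKernel (fun t r => r * g t)
      (fun _ => hg.continuousOn_mul (by fun_prop)) hx
  have hKgm : IntervalIntegrable (fun t => companionKernel a b x t * (g t - m)) volume a b :=
    intervalIntegrable_comp_companionKernel (fun t r => r * (g t - m))
      (fun _ => (hg.sub intervalIntegrable_const).continuousOn_mul (by fun_prop)) hx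
  have hcentre : ∫ t in a..b, companionKernel a b x t * g t
      = ∫ t in a..b, companionKernel a b x t * (g t - m) := by
    have hsplit : (fun t => companionKernel a b x t * (g t - m))
        = fun t => companionKernel a b x t * g t - m * companionKernel a b x t := by
      ext t; ring
    rw [hsplit, integral_sub hKg (hK.const_mul m), intervalIntegral.integral_const_mul,
      integral_companionKernel hx, mul_zero, sub_zero]
  rw [hcentre, ← integral_companionKernel_sq hx, ← integral_sq_sub_average hab.ne hg hg2,
    integral_of_le hab.le, integral_of_le hab.le, integral_of_le hab.le]
  exact sq_integral_mul_le_integral_sq_mul_integral_sq hK2.1 (hg.sq_sub_const hg2 m).1 hKgm.1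

end companionKernel

theorem companion_ostrowski_first_deriv_L2_general
    (a b : ℝ) (hab : a < b) (f f' : ℝ → ℝ)
    (hint : IntervalIntegrable f' MeasureTheory.volume a b)
    (hftc : ∀ x ∈ Set.Icc a b, f x - f a = ∫ t in a..x, f' t)
    (hL2 : IntervalIntegrable (fun t => (f' t) ^ 2) MeasureTheory.volume a b)
    (σ : ℝ) (hσ : σ = (∫ t in a..b, (f' t) ^ 2) - (f b - f a) ^ 2 / (b - a)) :
    ∀ x ∈ Set.Icc a ((a + b) / 2),
      |(f x + f (a + b - x)) / 2 - (1 / (b - a)) * ∫ t in a..b, f t|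
        ≤ (Real.sqrt (b - a))⁻¹ *
            Real.sqrt ((b - a) ^ 2 / 48 + (x - (3 * a + b) / 4) ^ 2) * Real.sqrt σ := by
  intro x hx
  have hf' : ∫ t in a..b, f' t = f b - f a := (hftc b (right_mem_Icc.2 hab.le)).symm
  have hmean : (f x + f (a + b - x)) / 2 - (1 / (b - a)) * ∫ t in a..b, f t
      = (∫ t in a..b, companionKernel a b x t * f' t) / (b - a) := by
    rw [integral_companionKernel_mul hx hint hftc]
    field_simp [(sub_pos.2 hab).ne']
  have hCS := sq_integral_companionKernel_mul_le hx hab hint hL2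
  rw [hf', ← hσ] at hCS
  rw [hmean]
  exact abs_div_le_of_sq_le (sub_pos.2 hab) (by positivity) hCS

/-- **Companion of Ostrowski's inequality for `f' ∈ L²[a,b]`** (Theorem 2.3, inequality (2.31)).
Absolute continuity of `f` on `[a,b]` with derivative `f'` is encoded by continuity of `f`
together with the fundamental theorem of calculus identity `f x - f a = ∫_a^x f'` for
`x ∈ [a,b]`, `f'` being integrable. With
`σ(f') = ∫_a^b f'(t)² dt - (f b - f a)²/(b - a)`, for all `x ∈ [a, (a+b)/2]`,
`|(f x + f (a+b-x))/2 - (1/(b-a)) ∫_a^b f|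
   ≤ (b-a)^{-1/2} · √((b-a)²/48 + (x - (3a+b)/4)²) · √(σ(f'))`. -/
theorem companion_ostrowski_first_deriv_L2
    (a b : ℝ) (hab : a < b) (f f' : ℝ → ℝ)
    (hcont : ContinuousOn f (Set.Icc a b))
    (hint : IntervalIntegrable f' MeasureTheory.volume a b)
    (hftc : ∀ x ∈ Set.Icc a b, f x - f a = ∫ t in a..x, f' t)
    (hL2 : IntervalIntegrable (fun t => (f' t) ^ 2) MeasureTheory.volume a b)
    (σ : ℝ) (hσ : σ = (∫ t in a..b, (f' t) ^ 2) - (f b - f a) ^ 2 / (b - a)) :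
    ∀ x ∈ Set.Icc a ((a + b) / 2),
      |(f x + f (a + b - x)) / 2 - (1 / (b - a)) * ∫ t in a..b, f t|
        ≤ (Real.sqrt (b - a))⁻¹ *
            Real.sqrt ((b - a) ^ 2 / 48 + (x - (3 * a + b) / 4) ^ 2) * Real.sqrt σ :=
  companion_ostrowski_first_deriv_L2_general a b hab f f' hint hftc hL2 σ hσ
end

section
/- Let a < b be real numbers, let a = x₀ < x₁ < ⋯ < xₙ = b be a partition of [a,b] with hᵢ = x_{i+1} − xᵢ, and let f : [a,b] → ℝ be differentiable on (a,b) with f' integrable on [a,b] and γ ≤ f'(x) ≤ Γ for all x ∈ [a,b]. Define S(f, Iₙ) = (1/2) ∑_{i=0}^{n−1} [f((3xᵢ + x_{i+1})/4) + f((xᵢ + 3x_{i+1})/4)] hᵢ and set Sᵢ = (f(x_{i+1}) − f(xᵢ))/hᵢ. Then |∫_a^b f(x) dx − S(f, Iₙ)| ≤ (1/4) ∑_{i=0}^{n−1} (Sᵢ − γ) hᵢ². -/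
/-!
Since `f' ≥ γ`, the function `g t = f t - γ t` is monotone, and subtracting the line `γ t` does not
change the quadrature error because the rule integrates linear functions exactly. On a cell
`[c, d]` the rule is the midpoint rule on each half; comparing a monotone `g` with its values at
the ends of the four quarters, the two midpoint errors partially cancel and the error is at most
`(d - c) / 4 · (g d - g c) = (d - c)² / 4 · (Sᵢ - γ)`.
-/

open Set intervalIntegral

namespace MonotoneOn

variable {g : ℝ → ℝ} {c d : ℝ}

theorem intervalIntegrable_of_le (hg : MonotoneOn g (Icc c d)) (hcd : c ≤ d) :
    IntervalIntegrable g MeasureTheory.volume c d :=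
  (hg.mono (uIcc_of_le hcd).subset).intervalIntegrable

theorem mul_le_intervalIntegral (hg : MonotoneOn g (Icc c d)) (hcd : c ≤ d) :
    (d - c) * g c ≤ ∫ t in c..d, g t := by
  have := integral_mono_on hcd intervalIntegrable_const (hg.intervalIntegrable_of_le hcd)
    fun t ht ↦ hg (left_mem_Icc.2 hcd) ht ht.1
  simpa using this

theorem intervalIntegral_le_mul (hg : MonotoneOn g (Icc c d)) (hcd : c ≤ d) :
    ∫ t in c..d, g t ≤ (d - c) * g d := by
  have := integral_mono_on hcd (hg.intervalIntegrable_of_le hcd) intervalIntegrable_const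
    fun t ht ↦ hg ht (right_mem_Icc.2 hcd) ht.2
  simpa using this

theorem intervalIntegral_sub_midpoint_mem_Icc (hg : MonotoneOn g (Icc c d)) (hcd : c ≤ d) :
    (∫ t in c..d, g t) - (d - c) * g ((c + d) / 2) ∈
      Icc ((d - c) / 2 * (g c - g ((c + d) / 2))) ((d - c) / 2 * (g d - g ((c + d) / 2))) := by
  set m := (c + d) / 2 with hm
  have hcm : c ≤ m := by linarith
  have hmd : m ≤ d := by linarith
  have hleft := hg.mono (Icc_subset_Icc_right hmd)
  have hright := hg.mono (Icc_subset_Icc_left hcm)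
  have hsplit : (∫ t in c..m, g t) + (∫ t in m..d, g t) = ∫ t in c..d, g t :=
    integral_add_adjacent_intervals (hleft.intervalIntegrable_of_le hcm)
      (hright.intervalIntegrable_of_le hmd)
  have h₁ := hleft.mul_le_intervalIntegral hcm
  have h₂ := hleft.intervalIntegral_le_mul hcm
  have h₃ := hright.mul_le_intervalIntegral hmd
  have h₄ := hright.intervalIntegral_le_mul hmd
  have hlen₁ : m - c = (d - c) / 2 := by ring
  have hlen₂ : d - m = (d - c) / 2 := by ring
  rw [hlen₁] at h₁ h₂
  rw [hlen₂] at h₃ h₄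
  constructor <;> linarith

theorem abs_intervalIntegral_sub_quarterPoints_le (hg : MonotoneOn g (Icc c d)) (hcd : c ≤ d) :
    |(∫ t in c..d, g t) - (1 / 2) * (g ((3 * c + d) / 4) + g ((c + 3 * d) / 4)) * (d - c)|
      ≤ (1 / 4) * (g d - g c) * (d - c) := by
  set m := (c + d) / 2 with hm
  have hcm : c ≤ m := by linarith
  have hmd : m ≤ d := by linarith
  have hleft := hg.mono (Icc_subset_Icc_right hmd)
  have hright := hg.mono (Icc_subset_Icc_left hcm)
  have hsplit : (∫ t in c..m, g t) + (∫ t in m..d, g t) = ∫ t in c..d, g t :=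
    integral_add_adjacent_intervals (hleft.intervalIntegrable_of_le hcm)
      (hright.intervalIntegrable_of_le hmd)
  obtain ⟨hl₁, hu₁⟩ := hleft.intervalIntegral_sub_midpoint_mem_Icc hcm
  obtain ⟨hl₂, hu₂⟩ := hright.intervalIntegral_sub_midpoint_mem_Icc hmd
  have hq₁ : (c + m) / 2 = (3 * c + d) / 4 := by ring
  have hq₃ : (m + d) / 2 = (c + 3 * d) / 4 := by ring
  have hlen₁ : m - c = (d - c) / 2 := by ring
  have hlen₂ : d - m = (d - c) / 2 := by ring
  rw [hq₁, hlen₁] at hl₁ hu₁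
  rw [hq₃, hlen₂] at hl₂ hu₂
  have hle : ∀ p q, c ≤ p → p ≤ q → q ≤ d → g p ≤ g q := fun p q hcp hpq hqd ↦
    hg ⟨hcp, hpq.trans hqd⟩ ⟨hcp.trans hpq, hqd⟩ hpq
  have hg₁ := hle c ((3 * c + d) / 4) le_rfl (by linarith) (by linarith)
  have hg₂ := hle ((3 * c + d) / 4) m (by linarith) (by linarith) hmd
  have hg₃ := hle m ((c + 3 * d) / 4) hcm (by linarith) (by linarith)
  have hg₄ := hle ((c + 3 * d) / 4) d (by linarith) (by linarith) le_rfl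
  rw [abs_le]
  constructor <;> nlinarith

end MonotoneOn

theorem monotoneOn_sub_mul_of_le_deriv {f f' : ℝ → ℝ} {a b γ : ℝ}
    (hf : ContinuousOn f (Icc a b)) (hderiv : ∀ t ∈ Ioo a b, HasDerivAt f (f' t) t)
    (hγ : ∀ t ∈ Ioo a b, γ ≤ f' t) :
    MonotoneOn (fun t ↦ f t - γ * t) (Icc a b) := by
  refine monotoneOn_of_hasDerivWithinAt_nonneg (f' := fun t ↦ f' t - γ) (convex_Icc a b)
    (hf.sub (continuousOn_const.mul continuousOn_id)) (fun t ht ↦ ?_) fun t ht ↦ ?_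
  · rw [interior_Icc] at ht ⊢
    exact ((hderiv t ht).sub ((hasDerivAt_id t).const_mul γ |>.congr_deriv (mul_one γ)))
      |>.hasDerivWithinAt
  · rw [interior_Icc] at ht
    exact sub_nonneg.2 (hγ t ht)

theorem abs_intervalIntegral_sub_quarterPoints_le_of_monotoneOn_sub_mul {f : ℝ → ℝ} {c d γ : ℝ}
    (hcd : c < d) (hg : MonotoneOn (fun t ↦ f t - γ * t) (Icc c d)) :
    |(∫ t in c..d, f t) - (1 / 2) * ((f ((3 * c + d) / 4) + f ((c + 3 * d) / 4)) * (d - c))|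
      ≤ (1 / 4) * (((f d - f c) / (d - c) - γ) * (d - c) ^ 2) := by
  have hline : IntervalIntegrable (fun t ↦ γ * t) MeasureTheory.volume c d :=
    (continuous_const.mul continuous_id).intervalIntegrable c d
  have hint : ∫ t in c..d, f t = (∫ t in c..d, f t - γ * t) + γ * ((d ^ 2 - c ^ 2) / 2) := by
    rw [← integral_id, ← integral_const_mul,
      ← integral_add (hg.intervalIntegrable_of_le hcd.le) hline]
    simp
  have hrise : ((f d - f c) / (d - c) - γ) * (d - c) ^ 2
      = ((f d - γ * d) - (f c - γ * c)) * (d - c) := by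
    field_simp [sub_ne_zero.2 hcd.ne']
    ring
  calc _ = |(∫ t in c..d, f t - γ * t)
          - (1 / 2) * ((f ((3 * c + d) / 4) - γ * ((3 * c + d) / 4))
            + (f ((c + 3 * d) / 4) - γ * ((c + 3 * d) / 4))) * (d - c)| := by
        rw [hint]; congr 1; ring
    _ ≤ _ := hg.abs_intervalIntegral_sub_quarterPoints_le hcd.le
    _ = _ := by rw [hrise]; ring

theorem composite_quadrature_L1_lower_general
    (a b γ Γ : ℝ) (n : ℕ)
    (x : ℕ → ℝ) (hx0 : x 0 = a) (hxn : x n = b)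
    (hmono : ∀ i < n, x i < x (i + 1))
    (f f' : ℝ → ℝ)
    (hcont : ContinuousOn f (Set.Icc a b))
    (hderiv : ∀ t ∈ Set.Ioo a b, HasDerivAt f (f' t) t)
    (hbound : ∀ t ∈ Set.Icc a b, γ ≤ f' t ∧ f' t ≤ Γ) :
    |(∫ t in a..b, f t) -
        (1 / 2) * ∑ i ∈ Finset.range n,
          (f ((3 * x i + x (i + 1)) / 4) + f ((x i + 3 * x (i + 1)) / 4)) * (x (i + 1) - x i)|
      ≤ (1 / 4) * ∑ i ∈ Finset.range n,
          ((f (x (i + 1)) - f (x i)) / (x (i + 1) - x i) - γ) * (x (i + 1) - x i) ^ 2 := by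
  have hx : MonotoneOn x (Iic n) := monotoneOn_of_le_succ ordConnected_Iic
    fun i _ _ hi ↦ (hmono i (Order.succ_le_iff.1 hi)).le
  have hsub : ∀ i < n, Icc (x i) (x (i + 1)) ⊆ Icc a b := fun i hi ↦
    Icc_subset_Icc (hx0 ▸ hx (Nat.zero_le n) hi.le (Nat.zero_le i))
      (hxn ▸ hx hi (mem_Iic.2 le_rfl) hi)
  have hg := monotoneOn_sub_mul_of_le_deriv hcont hderiv fun t ht ↦
    (hbound t (Ioo_subset_Icc_self ht)).1
  rw [← hx0, ← hxn, ← sum_integral_adjacent_intervals fun i hi ↦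
      (hcont.mono ((uIcc_of_le (hmono i hi).le).subset.trans (hsub i hi))).intervalIntegrable,
    Finset.mul_sum, Finset.mul_sum, ← Finset.sum_sub_distrib]
  refine (Finset.abs_sum_le_sum_abs _ _).trans (Finset.sum_le_sum fun i hi ↦ ?_)
  have hi := Finset.mem_range.1 hi
  exact abs_intervalIntegral_sub_quarterPoints_le_of_monotoneOn_sub_mul (hmono i hi)
    (hg.mono (hsub i hi))

/-- **Composite quadrature rule, lower-bound estimate** (Theorem 3.1, inequality (3.2)).
For a partition `a = x 0 < x 1 < ⋯ < x n = b` with `hᵢ = x (i+1) - x i`, and `f` continuous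
on `[a,b]`, differentiable on `(a,b)` with `f'` integrable and `γ ≤ f' ≤ Γ` on `[a,b]`,
the composite rule `S(f, Iₙ) = (1/2) ∑ᵢ [f((3xᵢ+x_{i+1})/4) + f((xᵢ+3x_{i+1})/4)] hᵢ`
satisfies `|∫_a^b f - S(f, Iₙ)| ≤ (1/4) ∑ᵢ (Sᵢ - γ) hᵢ²` where
`Sᵢ = (f x_{i+1} - f xᵢ)/hᵢ`. -/
theorem composite_quadrature_L1_lower
    (a b γ Γ : ℝ) (hab : a < b) (n : ℕ) (hn : 1 ≤ n)
    (x : ℕ → ℝ) (hx0 : x 0 = a) (hxn : x n = b)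
    (hmono : ∀ i < n, x i < x (i + 1))
    (f f' : ℝ → ℝ)
    (hcont : ContinuousOn f (Set.Icc a b))
    (hderiv : ∀ t ∈ Set.Ioo a b, HasDerivAt f (f' t) t)
    (hint : IntervalIntegrable f' MeasureTheory.volume a b)
    (hbound : ∀ t ∈ Set.Icc a b, γ ≤ f' t ∧ f' t ≤ Γ) :
    |(∫ t in a..b, f t) -
        (1 / 2) * ∑ i ∈ Finset.range n,
          (f ((3 * x i + x (i + 1)) / 4) + f ((x i + 3 * x (i + 1)) / 4)) * (x (i + 1) - x i)|
      ≤ (1 / 4) * ∑ i ∈ Finset.range n,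
          ((f (x (i + 1)) - f (x i)) / (x (i + 1) - x i) - γ) * (x (i + 1) - x i) ^ 2 :=
  composite_quadrature_L1_lower_general a b γ Γ n x hx0 hxn hmono f f' hcont hderiv hbound
end
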